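/- arXiv:1408.3206 — 8 statements merged into one kernel-verified Lean document; each statement's English description precedes it below -/
import Mathlib

section
/- The AF end-to-end SINR function γ(ρ) = ρ(1-ρ)XZ / [ρ(1-ρ)YZ + (1-ρ)(X+Y)(W+1) + ρZ + W + 1], viewed as a function of ρ on [0,1] with positive parameters X, Y, Z, W, is quasiconcave: there exists ε ∈ [0,1] such that γ is monotone nondecreasing on [0,ε] and monotone nonincreasing on [ε,1]. -/
theorem stmt_4 (X Y Z W : ℝ) (hX : 0 < X) (hY : 0 < Y) (hZ : 0 < Z) (hW : 0 < W)
    (γ : ℝ → ℝ)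
    (hγ : ∀ ρ, γ ρ = ρ * (1 - ρ) * X * Z /
      (ρ * (1 - ρ) * Y * Z + (1 - ρ) * (X + Y) * (W + 1) + ρ * Z + W + 1)) :
    ∃ ε ∈ Set.Icc (0 : ℝ) 1,
      MonotoneOn γ (Set.Icc 0 ε) ∧ AntitoneOn γ (Set.Icc ε 1) := by
  set A := (X + Y) * (W + 1) with hA
  set C := W + 1 with hC
  have hApos : 0 < A := by positivity
  have hCpos : 0 < C := by positivity
  -- the quadratic q whose root on [0,1] is the maximizer
  set q : ℝ → ℝ := fun ρ => (Z - A) * ρ ^ 2 + 2 * (A + C) * ρ - (A + C) with hqdef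
  have hq0 : q 0 < 0 := by simp [hqdef]; linarith
  have hq1 : 0 < q 1 := by simp [hqdef]; nlinarith
  have hqc : ContinuousOn q (Set.Icc (0 : ℝ) 1) := by fun_prop
  have hiv := intermediate_value_Icc (by norm_num : (0 : ℝ) ≤ 1) hqc
  have h0mem : (0 : ℝ) ∈ Set.Icc (q 0) (q 1) := ⟨hq0.le, hq1.le⟩
  obtain ⟨ε, hεmem, hεq⟩ := hiv h0mem
  obtain ⟨hε0, hε1⟩ := hεmem
  -- denominator positivity
  have hD : ∀ r : ℝ, r ∈ Set.Icc (0 : ℝ) 1 →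
      0 < r * (1 - r) * Y * Z + (1 - r) * (X + Y) * (W + 1) + r * Z + W + 1 := by
    intro r ⟨h0, h1⟩
    have h2 : 0 ≤ r * (1 - r) * Y * Z :=
      mul_nonneg (mul_nonneg (mul_nonneg h0 (by linarith)) hY.le) hZ.le
    have h3 : 0 ≤ (1 - r) * (X + Y) * (W + 1) :=
      mul_nonneg (mul_nonneg (by linarith) (by positivity)) (by positivity)
    nlinarith [mul_nonneg h0 hZ.le]
  -- the factor A*(1-t) + Z*t + C is nonneg for t ∈ [0,1]
  have hfac : ∀ t : ℝ, 0 ≤ t → t ≤ 1 → 0 ≤ A * (1 - t) + Z * t + C := by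
    intro t ht0 ht1
    have : 0 ≤ A * (1 - t) := mul_nonneg hApos.le (by linarith)
    nlinarith [mul_nonneg hZ.le ht0]
  refine ⟨ε, ⟨hε0, hε1⟩, ?_, ?_⟩
  · -- MonotoneOn on [0, ε]
    intro s hs t ht hst
    obtain ⟨hs0, hsε⟩ := hs
    obtain ⟨ht0, htε⟩ := ht
    have hs1 : s ≤ 1 := hsε.trans hε1
    have ht1 : t ≤ 1 := htε.trans hε1
    rw [hγ s, hγ t]
    rw [div_le_div_iff₀ (hD s ⟨hs0, hs1⟩) (hD t ⟨ht0, ht1⟩)]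
    have key : t * (1 - t) * X * Z *
          (s * (1 - s) * Y * Z + (1 - s) * (X + Y) * (W + 1) + s * Z + W + 1)
        - s * (1 - s) * X * Z *
          (t * (1 - t) * Y * Z + (1 - t) * (X + Y) * (W + 1) + t * Z + W + 1)
        = X * Z * (t - s) * (ε - s) * (A * (1 - t) + Z * t + C)
          + X * Z * (t - s) * (ε - t) * (A * (1 - ε) + Z * ε + C)
          - X * Z * (t - s) * q ε := by
      simp only [hqdef, hA, hC]; ring
    have hq0' : X * Z * (t - s) * q ε = 0 := by rw [hεq]; ring
    have h1 : 0 ≤ X * Z * (t - s) * (ε - s) * (A * (1 - t) + Z * t + C) := by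
      apply mul_nonneg; apply mul_nonneg; apply mul_nonneg
      positivity; linarith; linarith; exact hfac t ht0 ht1
    have h2 : 0 ≤ X * Z * (t - s) * (ε - t) * (A * (1 - ε) + Z * ε + C) := by
      apply mul_nonneg; apply mul_nonneg; apply mul_nonneg
      positivity; linarith; linarith; exact hfac ε hε0 hε1
    linarith [key, hq0', h1, h2]
  · -- AntitoneOn on [ε, 1]
    intro s hs t ht hst
    obtain ⟨hsε, hs1⟩ := hs
    obtain ⟨htε, ht1⟩ := ht
    have hs0 : 0 ≤ s := hε0.trans hsε
    have ht0 : 0 ≤ t := hε0.trans htε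
    rw [hγ s, hγ t]
    rw [div_le_div_iff₀ (hD t ⟨ht0, ht1⟩) (hD s ⟨hs0, hs1⟩)]
    have key : s * (1 - s) * X * Z *
          (t * (1 - t) * Y * Z + (1 - t) * (X + Y) * (W + 1) + t * Z + W + 1)
        - t * (1 - t) * X * Z *
          (s * (1 - s) * Y * Z + (1 - s) * (X + Y) * (W + 1) + s * Z + W + 1)
        = X * Z * (t - s) * (s - ε) * (A * (1 - t) + Z * t + C)
          + X * Z * (t - s) * (t - ε) * (A * (1 - ε) + Z * ε + C)
          + X * Z * (t - s) * q ε := by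
      simp only [hqdef, hA, hC]; ring
    have hq0' : X * Z * (t - s) * q ε = 0 := by rw [hεq]; ring
    have h1 : 0 ≤ X * Z * (t - s) * (s - ε) * (A * (1 - t) + Z * t + C) := by
      apply mul_nonneg; apply mul_nonneg; apply mul_nonneg
      positivity; linarith; linarith; exact hfac t ht0 ht1
    have h2 : 0 ≤ X * Z * (t - s) * (t - ε) * (A * (1 - ε) + Z * ε + C) := by
      apply mul_nonneg; apply mul_nonneg; apply mul_nonneg
      positivity; linarith; linarith; exact hfac ε hε0 hε1
    linarith [key, hq0', h1, h2]
end

section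
/- The derivative of the AF utility u(ρ) = (1/2)·log(1 + γ(ρ)) with respect to ρ has the same sign as κ(ρ) = C·ρ² - 2D·ρ + D, where C = (X+Y)(W+1) - Z and D = (X+Y+1)(W+1). -/
/-!
Writing `γ = N / Q` (`afSnrNum`, `afSnrDen`) with `N`, `Q` quadratics in `ρ`,
`u' = (N' Q - N Q') / (2 Q (Q + N))`. The denominator is positive on `(0, 1)`, and a direct
expansion shows `N' Q - N Q' = XZ · (Cρ² - 2Dρ + D)`, so `u'` is a positive multiple of `κ`.
-/

open Real

lemma Real.sign_mul_of_pos {a : ℝ} (ha : 0 < a) (r : ℝ) : sign (a * r) = sign r := by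
  rcases lt_trichotomy r 0 with hr | rfl | hr
  · rw [sign_of_neg (mul_neg_of_pos_of_neg ha hr), sign_of_neg hr]
  · rw [mul_zero]
  · rw [sign_of_pos (mul_pos ha hr), sign_of_pos hr]

lemma hasDerivAt_half_log_one_add_div {f g : ℝ → ℝ} {f' g' x : ℝ}
    (hf : HasDerivAt f f' x) (hg : HasDerivAt g g' x) (hg₀ : 0 < g x) (hfg : 0 < g x + f x) :
    HasDerivAt (fun t => 1 / 2 * log (1 + f t / g t))
      ((f' * g x - f x * g') / (2 * g x * (g x + f x))) x := by
  have hpos : 0 < 1 + f x / g x := by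
    rw [one_add_div hg₀.ne']; exact div_pos hfg hg₀
  refine ((((hf.div hg hg₀.ne').const_add 1).log hpos.ne').const_mul (1 / 2 : ℝ)).congr_deriv ?_
  rw [Pi.div_apply]
  field_simp

lemma hasDerivAt_quadratic (a b c x : ℝ) :
    HasDerivAt (fun t => a * t ^ 2 + b * t + c) (2 * a * x + b) x := by
  refine ((((hasDerivAt_pow 2 x).const_mul a).add ((hasDerivAt_id x).const_mul b)).add_const c
    ).congr_deriv ?_
  ring

section AFUtility

variable (X Y Z W : ℝ)

def afSnrNum (ρ : ℝ) : ℝ := ρ * (1 - ρ) * X * Z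

def afSnrDen (ρ : ℝ) : ℝ :=
  ρ * (1 - ρ) * Y * Z + (1 - ρ) * (X + Y) * (W + 1) + ρ * Z + W + 1

lemma hasDerivAt_afSnrNum (ρ : ℝ) :
    HasDerivAt (afSnrNum X Z) ((1 - 2 * ρ) * X * Z) ρ := by
  convert hasDerivAt_quadratic (-(X * Z)) (X * Z) 0 ρ using 1
  · funext t; simp only [afSnrNum]; ring
  · ring

lemma hasDerivAt_afSnrDen (ρ : ℝ) :
    HasDerivAt (afSnrDen X Y Z W) ((1 - 2 * ρ) * Y * Z - (X + Y) * (W + 1) + Z) ρ := by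
  convert hasDerivAt_quadratic (-(Y * Z)) (Y * Z - (X + Y) * (W + 1) + Z)
    ((X + Y) * (W + 1) + W + 1) ρ using 1
  · funext t; simp only [afSnrDen]; ring
  · ring

variable {X Y Z W}

lemma afSnrNum_pos (hX : 0 < X) (hZ : 0 < Z) {ρ : ℝ} (hρ : ρ ∈ Set.Ioo (0 : ℝ) 1) :
    0 < afSnrNum X Z ρ := by
  obtain ⟨hρ₀, hρ₁⟩ := hρ
  have h1ρ : 0 < 1 - ρ := sub_pos.mpr hρ₁
  unfold afSnrNum; positivity

lemma afSnrDen_pos (hX : 0 < X) (hY : 0 < Y) (hZ : 0 < Z) (hW : 0 < W) {ρ : ℝ}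
    (hρ : ρ ∈ Set.Ioo (0 : ℝ) 1) : 0 < afSnrDen X Y Z W ρ := by
  obtain ⟨hρ₀, hρ₁⟩ := hρ
  have h1ρ : 0 < 1 - ρ := sub_pos.mpr hρ₁
  unfold afSnrDen; positivity

variable (X Y Z W)

lemma afSnr_wronskian_eq (ρ : ℝ) :
    (1 - 2 * ρ) * X * Z * afSnrDen X Y Z W ρ
        - afSnrNum X Z ρ * ((1 - 2 * ρ) * Y * Z - (X + Y) * (W + 1) + Z)
      = X * Z * (((X + Y) * (W + 1) - Z) * ρ ^ 2 - 2 * ((X + Y + 1) * (W + 1)) * ρ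
          + (X + Y + 1) * (W + 1)) := by
  unfold afSnrNum afSnrDen; ring

end AFUtility

theorem stmt_5 (X Y Z W : ℝ) (hX : 0 < X) (hY : 0 < Y) (hZ : 0 < Z) (hW : 0 < W)
    (C D : ℝ) (hC : C = (X + Y) * (W + 1) - Z) (hD : D = (X + Y + 1) * (W + 1))
    (γ u : ℝ → ℝ)
    (hγ : ∀ ρ, γ ρ = ρ * (1 - ρ) * X * Z /
      (ρ * (1 - ρ) * Y * Z + (1 - ρ) * (X + Y) * (W + 1) + ρ * Z + W + 1))
    (hu : ∀ ρ, u ρ = (1 / 2) * Real.log (1 + γ ρ)) :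
    ∀ ρ ∈ Set.Ioo (0 : ℝ) 1,
      Real.sign (deriv u ρ) = Real.sign (C * ρ ^ 2 - 2 * D * ρ + D) := by
  intro ρ hρ
  have hu_eq : u = fun t => 1 / 2 * log (1 + afSnrNum X Z t / afSnrDen X Y Z W t) := by
    funext t; rw [hu, hγ]; rfl
  have hN := afSnrNum_pos hX hZ hρ
  have hQ := afSnrDen_pos hX hY hZ hW hρ
  have hderiv := hasDerivAt_half_log_one_add_div (hasDerivAt_afSnrNum X Z ρ)
    (hasDerivAt_afSnrDen X Y Z W ρ) hQ (by positivity)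
  rw [hu_eq, hderiv.deriv, afSnr_wronskian_eq, ← hC, ← hD, mul_div_right_comm]
  exact sign_mul_of_pos (by positivity) _
end

section
/- When (X+Y)(W+1) = Z, the AF SINR γ(ρ) = ρ(1-ρ)XZ / [ρ(1-ρ)YZ + (1-ρ)(X+Y)(W+1) + ρZ + W + 1] is maximized over [0,1] at ρ = 1/2. -/
theorem stmt_6 (X Y Z W : ℝ) (hX : 0 < X) (hY : 0 < Y) (hZ : 0 < Z) (hW : 0 < W)
    (heq : (X + Y) * (W + 1) = Z)
    (γ : ℝ → ℝ)
    (hγ : ∀ ρ, γ ρ = ρ * (1 - ρ) * X * Z /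
      (ρ * (1 - ρ) * Y * Z + (1 - ρ) * (X + Y) * (W + 1) + ρ * Z + W + 1)) :
    ∀ ρ ∈ Set.Icc (0 : ℝ) 1, γ ρ ≤ γ (1 / 2) := by
  intro ρ hρ
  obtain ⟨h0, h1⟩ := hρ
  rw [hγ, hγ]
  have ht : 0 ≤ ρ * (1 - ρ) := mul_nonneg h0 (by linarith)
  have ht4 : ρ * (1 - ρ) ≤ 1 / 4 := by nlinarith [sq_nonneg (ρ - 1/2)]
  have hsub : ∀ r : ℝ, (1 - r) * (X + Y) * (W + 1) = (1 - r) * Z := by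
    intro r; rw [mul_assoc, heq]
  have hd1 : 0 < ρ * (1 - ρ) * Y * Z + (1 - ρ) * (X + Y) * (W + 1) + ρ * Z + W + 1 := by
    rw [hsub]; nlinarith [mul_nonneg (mul_nonneg ht hY.le) hZ.le]
  have hd2 : 0 < (1/2 : ℝ) * (1 - 1/2) * Y * Z + (1 - 1/2) * (X + Y) * (W + 1) + (1/2) * Z + W + 1 := by
    rw [hsub]; nlinarith
  rw [div_le_div_iff₀ hd1 hd2, hsub, hsub]
  nlinarith [mul_nonneg (mul_nonneg (mul_nonneg ht hX.le) hZ.le) (by linarith : (0:ℝ) ≤ Z + W + 1),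
    mul_le_mul_of_nonneg_right ht4 (mul_nonneg (mul_nonneg hX.le hZ.le) (by linarith : (0:ℝ) ≤ Z + W + 1))]
end

section
/- For the AF best response B(W) = √((X+Y+1)(W+1)) / (√((X+Y+1)(W+1)) + √(Z+W+1)) with X, Y, Z > 0 and any α > 1 and W > 0, it holds that α·B(W) > B(αW). -/
theorem stmt_8 (X Y Z : ℝ) (hX : 0 < X) (hY : 0 < Y) (hZ : 0 < Z)
    (B : ℝ → ℝ)
    (hB : ∀ W, B W = Real.sqrt ((X + Y + 1) * (W + 1)) /
      (Real.sqrt ((X + Y + 1) * (W + 1)) + Real.sqrt (Z + W + 1))) :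
    ∀ α > (1 : ℝ), ∀ W > (0 : ℝ), B (α * W) < α * B W := by
  intro α hα W hW
  rw [hB, hB]
  set a := Real.sqrt ((X + Y + 1) * (W + 1)) with ha_def
  set b := Real.sqrt (Z + W + 1) with hb_def
  set a' := Real.sqrt ((X + Y + 1) * (α * W + 1)) with ha'_def
  set b' := Real.sqrt (Z + (α * W) + 1) with hb'_def
  have hK : (0:ℝ) < X + Y + 1 := by linarith
  have ha : 0 < a := Real.sqrt_pos.mpr (by positivity)
  have hb : 0 < b := Real.sqrt_pos.mpr (by linarith)
  have ha' : 0 < a' := Real.sqrt_pos.mpr (mul_pos hK (by nlinarith))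
  have hb' : 0 < b' := Real.sqrt_pos.mpr (by nlinarith)
  have h1 : a' ≤ Real.sqrt α * a := by
    rw [ha'_def, ha_def, ← Real.sqrt_mul (by linarith : (0:ℝ) ≤ α)]
    apply Real.sqrt_le_sqrt
    nlinarith
  have h2 : b < b' := by
    apply Real.sqrt_lt_sqrt (by linarith)
    nlinarith
  have h4 : 0 ≤ Real.sqrt α := Real.sqrt_nonneg α
  have h5 : 1 < Real.sqrt α := by
    rw [show (1:ℝ) = Real.sqrt 1 by simp]
    exact Real.sqrt_lt_sqrt zero_le_one hα
  have h3 : Real.sqrt α < α := by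
    nlinarith [Real.sq_sqrt (by linarith : (0:ℝ) ≤ α)]
  rw [mul_div_assoc', div_lt_div_iff₀ (by linarith) (by linarith)]
  nlinarith [mul_pos ha hb, mul_pos ha' ha, mul_pos ha hb']
end

section
/- The DF best response ρ*(W) = [XW + X + YZ + Z - √((XW + X - YZ + Z)² + 4YZ²)]/(2YZ) satisfies dρ*/dW > 0 for all W > 0, i.e., it is strictly increasing in W, for fixed X, Y, Z > 0. -/
/-! With `u = XW + X - YZ + Z` and `c = 4YZ²`, the numerator of `ρ*` is `2YZ + (u - √(u² + c))`,
and `t ↦ t - √(t² + c)` has derivative `1 - t / √(t² + c) > 0` because `t < √(t² + c)`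
when `c > 0`. Composing with the increasing affine map `W ↦ u` gives `dρ*/dW > 0` on all of `ℝ`. -/

open Real

section SubSqrtSqAdd

variable {c : ℝ} (t : ℝ)

theorem hasDerivAt_sub_sqrt_sq_add (hc : 0 < c) :
    HasDerivAt (fun t => t - √(t ^ 2 + c)) (1 - t / √(t ^ 2 + c)) t := by
  have hsq : HasDerivAt (fun t => t ^ 2 + c) (2 * t) t := by
    simpa using (hasDerivAt_pow 2 t).add_const c
  refine ((hasDerivAt_id' t).sub (hsq.sqrt (by positivity))).congr_deriv ?_
  rw [mul_div_mul_left _ _ two_ne_zero]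

theorem one_sub_div_sqrt_sq_add_pos (hc : 0 < c) : 0 < 1 - t / √(t ^ 2 + c) := by
  rw [sub_pos, div_lt_one (by positivity)]
  exact lt_sqrt_of_sq_lt (by linarith)

end SubSqrtSqAdd

theorem stmt_14 (X Y Z : ℝ) (hX : 0 < X) (hY : 0 < Y) (hZ : 0 < Z)
    (ρstar : ℝ → ℝ)
    (hρ : ∀ W, ρstar W = (X * W + X + Y * Z + Z -
      Real.sqrt ((X * W + X - Y * Z + Z) ^ 2 + 4 * Y * Z ^ 2)) / (2 * Y * Z)) :
    (∀ W > (0 : ℝ), 0 < deriv ρstar W) ∧ StrictMonoOn ρstar (Set.Ioi 0) := by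
  set u : ℝ → ℝ := fun W => X * W + X - Y * Z + Z
  have hc : 0 < 4 * Y * Z ^ 2 := by positivity
  have hρu : ρstar = fun W => (u W - √(u W ^ 2 + 4 * Y * Z ^ 2) + 2 * Y * Z) / (2 * Y * Z) := by
    funext W
    rw [hρ]
    simp only [u]
    ring
  have hderiv : ∀ W, HasDerivAt ρstar
      ((1 - u W / √(u W ^ 2 + 4 * Y * Z ^ 2)) * X / (2 * Y * Z)) W := by
    intro W
    have hu : HasDerivAt u X W :=
      ((((hasDerivAt_id' W).const_mul X).add_const X).sub_const (Y * Z)).add_const Z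
        |>.congr_deriv (mul_one X)
    rw [hρu]
    exact (((hasDerivAt_sub_sqrt_sq_add (u W) hc).comp W hu).add_const _).div_const _
  have hpos : ∀ W, 0 < deriv ρstar W := fun W => by
    rw [(hderiv W).deriv]
    have := one_sub_div_sqrt_sq_add_pos (u W) hc
    positivity
  exact ⟨fun W _ => hpos W, (strictMono_of_deriv_pos hpos).strictMonoOn _⟩
end

section
/- For the DF best response ρ*(W) = (XW + X + YZ + Z - √((XW + X - YZ + Z)² + 4YZ²))/(2YZ) with X, Y, Z > 0, and any α > 1 and W > 0, it holds that α·ρ*(W) > ρ*(α·W). -/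
set_option maxHeartbeats 1000000 in
theorem stmt_15 (X Y Z : ℝ) (hX : 0 < X) (hY : 0 < Y) (hZ : 0 < Z)
    (ρstar : ℝ → ℝ)
    (hρ : ∀ W, ρstar W = (X * W + X + Y * Z + Z -
      Real.sqrt ((X * W + X - Y * Z + Z) ^ 2 + 4 * Y * Z ^ 2)) / (2 * Y * Z)) :
    ∀ α > (1 : ℝ), ∀ W > (0 : ℝ), ρstar (α * W) < α * ρstar W := by
  intro α hα W hW
  have hk : 0 < Y * Z := mul_pos hY hZ
  obtain ⟨s, hsval, hs0, hs2⟩ : ∃ s, Real.sqrt ((X * W + X - Y * Z + Z) ^ 2 + 4 * Y * Z ^ 2) = s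
      ∧ 0 ≤ s ∧ s ^ 2 = (X * W + X - Y * Z + Z) ^ 2 + 4 * Y * Z ^ 2 :=
    ⟨_, rfl, Real.sqrt_nonneg _, Real.sq_sqrt (by positivity)⟩
  obtain ⟨t, htval, ht0, ht2⟩ : ∃ t,
      Real.sqrt ((X * (α * W) + X - Y * Z + Z) ^ 2 + 4 * Y * Z ^ 2) = t
      ∧ 0 ≤ t ∧ t ^ 2 = (X * (α * W) + X - Y * Z + Z) ^ 2 + 4 * Y * Z ^ 2 :=
    ⟨_, rfl, Real.sqrt_nonneg _, Real.sq_sqrt (by positivity)⟩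
  obtain ⟨p, hpval⟩ : ∃ p, ρstar W = p := ⟨_, rfl⟩
  obtain ⟨q, hqval⟩ : ∃ q, ρstar (α * W) = q := ⟨_, rfl⟩
  have hpdef : p = (X * W + X + Y * Z + Z - s) / (2 * Y * Z) := by
    rw [← hpval, hρ W, hsval]
  have hqdef : q = (X * (α * W) + X + Y * Z + Z - t) / (2 * Y * Z) := by
    rw [← hqval, hρ (α * W), htval]
  rw [hpval, hqval]
  have hBpos : 0 < X * W + X := by nlinarith
  have hCpos : 0 < X * (α * W) + X := by
    have h1 : 0 < α * W := mul_pos (by linarith) hW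
    nlinarith
  have hpk : 2 * Y * Z * p = X * W + X + Y * Z + Z - s := by
    rw [hpdef]; field_simp
  have hqk : 2 * Y * Z * q = X * (α * W) + X + Y * Z + Z - t := by
    rw [hqdef]; field_simp
  -- p > 0
  have hsltB : s < X * W + X + Y * Z + Z := by
    nlinarith [hs2, hs0, mul_pos hk hBpos]
  have hp0 : 0 < p := by nlinarith [hpk]
  -- p < 1
  have hsgt : X * W + X + Z - Y * Z < s := by
    nlinarith [hs2, hs0, mul_pos hk hZ]
  have hp1 : p < 1 := by nlinarith [hpk]
  -- q < 1
  have htgt : X * (α * W) + X + Z - Y * Z < t := by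
    nlinarith [ht2, ht0, mul_pos hk hZ]
  have hq1 : q < 1 := by nlinarith [hqk]
  -- quadratic identities
  have hquadp : Y * Z * p ^ 2 - (X * W + X + Y * Z + Z) * p + (X * W + X) = 0 := by
    have hs' : s = X * W + X + Y * Z + Z - 2 * Y * Z * p := by linarith
    have h := hs2
    rw [hs'] at h
    have h4 : 4 * (Y * Z) * (Y * Z * p ^ 2 - (X * W + X + Y * Z + Z) * p + (X * W + X)) = 0 := by
      linear_combination h
    have hk4 : (4:ℝ) * (Y * Z) ≠ 0 := by positivity
    exact (mul_eq_zero.mp h4).resolve_left hk4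
  have hquadq : Y * Z * q ^ 2 - (X * (α * W) + X + Y * Z + Z) * q + (X * (α * W) + X) = 0 := by
    have ht' : t = X * (α * W) + X + Y * Z + Z - 2 * Y * Z * q := by linarith
    have h := ht2
    rw [ht'] at h
    have h4 : 4 * (Y * Z) *
        (Y * Z * q ^ 2 - (X * (α * W) + X + Y * Z + Z) * q + (X * (α * W) + X)) = 0 := by
      linear_combination h
    have hk4 : (4:ℝ) * (Y * Z) ≠ 0 := by positivity
    exact (mul_eq_zero.mp h4).resolve_left hk4
  -- q is below the vertex of its quadratic
  have hqv : 2 * Y * Z * q ≤ X * (α * W) + X + Y * Z + Z := by linarith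
  rcases lt_or_ge (α * p) 1 with hap | hap
  · -- main case : α * p < 1
    by_contra hcon
    push_neg at hcon
    -- hcon : α * p ≤ q
    have hBkp : 0 < X * W + X - Y * Z * p := by
      have key : (X * W + X - Y * Z * p) * (1 - p) = p * Z := by linear_combination hquadp
      nlinarith [mul_pos hp0 hZ]
    have h1 : 0 < (α - 1) * (α * p * (X * W + X - Y * Z * p) + X * (1 - α * p)) := by
      apply mul_pos (by linarith)
      have ha1 := mul_pos (mul_pos (by linarith : (0:ℝ) < α) hp0) hBkp
      have ha2 := mul_pos hX (by linarith : (0:ℝ) < 1 - α * p)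
      nlinarith
    have key2 : Y * Z * (α * p) ^ 2 - (X * (α * W) + X + Y * Z + Z) * (α * p)
          + (X * (α * W) + X) =
        -((α - 1) * (α * p * (X * W + X - Y * Z * p) + X * (1 - α * p))) := by
      linear_combination α * hquadp
    have hfαp : Y * Z * (α * p) ^ 2 - (X * (α * W) + X + Y * Z + Z) * (α * p)
        + (X * (α * W) + X) < 0 := by
      rw [key2]; linarith
    have h2 : 0 ≤ (q - α * p) *
        ((X * (α * W) + X + Y * Z + Z) - Y * Z * q - Y * Z * (α * p)) := by
      apply mul_nonneg (by linarith)
      have hkq : Y * Z * (α * p) ≤ Y * Z * q := mul_le_mul_of_nonneg_left hcon hk.le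
      linarith
    nlinarith [h2, hquadq, hfαp]
  · -- easy case : 1 ≤ α * p
    exact lt_of_lt_of_le hq1 hap
end

section
/- Let B : [0,1]ᴺ → [0,1]ᴺ be a standard function (componentwise positive, monotone: ρ ≥ ρ' implies B(ρ) ≥ B(ρ'), and scalable: α·B(ρ) > B(α·ρ) for all α > 1). Then B has at most one fixed point in [0,1]ᴺ. -/
theorem stmt_18 (N : Type*) [Fintype N]
    (B : (N → ℝ) → (N → ℝ))
    (hdom : ∀ ρ : N → ℝ, (∀ i, ρ i ∈ Set.Icc (0 : ℝ) 1) → ∀ i, B ρ i ∈ Set.Icc (0 : ℝ) 1)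
    (hpos : ∀ ρ : N → ℝ, (∀ i, ρ i ∈ Set.Icc (0 : ℝ) 1) → ∀ i, 0 < B ρ i)
    (hmono : ∀ ρ ρ' : N → ℝ, (∀ i, ρ i ∈ Set.Icc (0 : ℝ) 1) →
      (∀ i, ρ' i ∈ Set.Icc (0 : ℝ) 1) → ρ' ≤ ρ → B ρ' ≤ B ρ)
    (hscal : ∀ (α : ℝ), 1 < α → ∀ ρ : N → ℝ, (∀ i, ρ i ∈ Set.Icc (0 : ℝ) 1) →
      (∀ i, α * ρ i ∈ Set.Icc (0 : ℝ) 1) → ∀ i, B (fun j => α * ρ j) i < α * B ρ i) :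
    ∀ ρ ρ' : N → ℝ, (∀ i, ρ i ∈ Set.Icc (0 : ℝ) 1) → (∀ i, ρ' i ∈ Set.Icc (0 : ℝ) 1) →
      B ρ = ρ → B ρ' = ρ' → ρ = ρ' := by
  have key : ∀ ρ ρ' : N → ℝ, (∀ i, ρ i ∈ Set.Icc (0 : ℝ) 1) →
      (∀ i, ρ' i ∈ Set.Icc (0 : ℝ) 1) → B ρ = ρ → B ρ' = ρ' → ρ' ≤ ρ := by
    intro ρ ρ' hρ hρ' hfix hfix'
    by_contra h
    simp only [Pi.le_def, not_forall, not_le] at h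
    obtain ⟨j, hj⟩ := h
    have hρpos : ∀ i, 0 < ρ i := by
      intro i; have := hpos ρ hρ i; rwa [hfix] at this
    obtain ⟨k, -, hk⟩ := Finset.exists_max_image Finset.univ
      (fun i => ρ' i / ρ i) ⟨j, Finset.mem_univ j⟩
    set α : ℝ := ρ' k / ρ k with hα
    have hα1 : 1 < α := lt_of_lt_of_le ((one_lt_div (hρpos j)).mpr hj)
      (hk j (Finset.mem_univ j))
    have hαpos : 0 < α := lt_trans one_pos hα1
    have hle : ∀ i, ρ' i ≤ α * ρ i := by
      intro i
      have := hk i (Finset.mem_univ i)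
      calc ρ' i = ρ' i / ρ i * ρ i := (div_mul_cancel₀ _ (hρpos i).ne').symm
        _ ≤ α * ρ i := by
          exact mul_le_mul_of_nonneg_right this (hρpos i).le
    set σ : N → ℝ := fun i => ρ' i / α with hσ
    have hfun : (fun j => α * σ j) = ρ' := by
      funext i; simp only [hσ]; field_simp
    have hσdom : ∀ i, σ i ∈ Set.Icc (0 : ℝ) 1 := by
      intro i
      constructor
      · exact div_nonneg (hρ' i).1 hαpos.le
      · have : σ i ≤ ρ i := by
          rw [hσ, div_le_iff₀ hαpos]
          calc ρ' i ≤ α * ρ i := hle i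
            _ = ρ i * α := mul_comm _ _
        exact this.trans (hρ i).2
    have hσρ : σ ≤ ρ := by
      intro i
      have := (hσdom i)
      rw [hσ]
      rw [div_le_iff₀ hαpos]
      calc ρ' i ≤ α * ρ i := hle i
        _ = ρ i * α := mul_comm _ _
    have hασdom : ∀ i, α * σ i ∈ Set.Icc (0 : ℝ) 1 := by
      intro i
      have : α * σ i = ρ' i := congrFun hfun i
      rw [this]; exact hρ' i
    have hs := hscal α hα1 σ hσdom hασdom k
    rw [hfun] at hs
    have hmB : B σ k ≤ B ρ k := hmono ρ σ hρ hσdom hσρ k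
    have hkeq : ρ' k = α * ρ k := by
      rw [hα, div_mul_cancel₀ _ (hρpos k).ne']
    have : ρ' k < ρ' k := by
      calc ρ' k = B ρ' k := (congrFun hfix' k).symm
        _ < α * B σ k := hs
        _ ≤ α * B ρ k := mul_le_mul_of_nonneg_left hmB hαpos.le
        _ = α * ρ k := by rw [hfix]
        _ = ρ' k := hkeq.symm
    exact lt_irrefl _ this
  intro ρ ρ' hρ hρ' hfix hfix'
  exact le_antisymm (key ρ' ρ hρ' hρ hfix' hfix) (key ρ ρ' hρ hρ' hfix hfix')
end

section
/- Define F(α) = α·B(W) - B(αW) where B(W) = (XW + X + YZ + Z - √((XW + X - YZ + Z)² + 4YZ²))/(2YZ). Then F is strictly convex in α on (0,∞): its second derivative ∂²F/∂α² = 2Z(XW)² / [((αXW + X - YZ + Z)² + 4YZ²)^{3/2}] > 0 for all α > 0, provided X, Y, Z, W > 0. -/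
/-!
Up to an affine function of `α`, `F α` equals `√((a α + c)² + d) / (2YZ)` with `a = XW`,
`c = X - YZ + Z`, `d = 4YZ²`. Since `√(u² + d)` has derivative `u / √(u² + d)` and second
derivative `d / (u² + d)^{3/2}` in `u`, the second derivative is `a² d / (2YZ (…)^{3/2})`,
which simplifies to `2Z (XW)² / (…)^{3/2} > 0`.
-/

open Real

lemma rpow_three_halves_eq_mul_sqrt {x : ℝ} (hx : 0 ≤ x) : x ^ (3 / 2 : ℝ) = x * √x := by
  rw [sqrt_eq_rpow, ← rpow_one_add' hx (by norm_num)]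
  norm_num

section SqrtQuadratic

variable (a c : ℝ) {d : ℝ} (hd : 0 < d)
include hd

lemma hasDerivAt_sqrt_sq_add (t : ℝ) :
    HasDerivAt (fun t => √((a * t + c) ^ 2 + d)) (a * (a * t + c) / √((a * t + c) ^ 2 + d)) t := by
  have hq : HasDerivAt (fun t => (a * t + c) ^ 2 + d) (2 * (a * t + c) * a) t := by
    simpa using ((((hasDerivAt_id t).const_mul a).add_const c).pow 2).add_const d
  convert hq.sqrt (by positivity) using 1
  field_simp

lemma deriv_sqrt_sq_add :
    deriv (fun t => √((a * t + c) ^ 2 + d)) = fun t => a * (a * t + c) / √((a * t + c) ^ 2 + d) :=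
  funext fun t => (hasDerivAt_sqrt_sq_add a c hd t).deriv

lemma deriv_deriv_sqrt_sq_add (t : ℝ) :
    deriv (deriv fun t => √((a * t + c) ^ 2 + d)) t =
      a ^ 2 * d / ((a * t + c) ^ 2 + d) ^ (3 / 2 : ℝ) := by
  have hg : 0 < (a * t + c) ^ 2 + d := by positivity
  have hs : √((a * t + c) ^ 2 + d) ≠ 0 := (sqrt_pos.mpr hg).ne'
  have hnum : HasDerivAt (fun t => a * (a * t + c)) (a * a) t := by
    simpa using (((hasDerivAt_id t).const_mul a).add_const c).const_mul a
  rw [deriv_sqrt_sq_add a c hd, rpow_three_halves_eq_mul_sqrt hg.le]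
  refine (hnum.div (hasDerivAt_sqrt_sq_add a c hd t) hs).deriv.trans ?_
  field_simp
  rw [sq_sqrt hg.le]
  ring

end SqrtQuadratic

lemma deriv_deriv_affine_add_const_mul {s : ℝ → ℝ} (hs : Differentiable ℝ s) (p q k x : ℝ) :
    deriv (deriv fun t => p * t + q + k * s t) x = k * deriv (deriv s) x := by
  have h : deriv (fun t => p * t + q + k * s t) = fun t => p + k * deriv s t := by
    funext t
    refine ((((hasDerivAt_id t).const_mul p).add_const q).add
      ((hs t).hasDerivAt.const_mul k)).deriv.trans ?_
    simp
  rw [h, deriv_const_add', deriv_const_mul_field']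

theorem stmt_19 (X Y Z W : ℝ) (hX : 0 < X) (hY : 0 < Y) (hZ : 0 < Z) (hW : 0 < W)
    (B : ℝ → ℝ)
    (hB : ∀ V, B V = (X * V + X + Y * Z + Z -
      Real.sqrt ((X * V + X - Y * Z + Z) ^ 2 + 4 * Y * Z ^ 2)) / (2 * Y * Z))
    (F : ℝ → ℝ) (hF : ∀ α, F α = α * B W - B (α * W)) :
    ∀ α > (0 : ℝ),
      deriv (deriv F) α = 2 * Z * (X * W) ^ 2 /
        (((α * X * W + X - Y * Z + Z) ^ 2 + 4 * Y * Z ^ 2) ^ ((3 : ℝ) / 2)) ∧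
      0 < deriv (deriv F) α := by
  intro α _
  have hd : 0 < 4 * Y * Z ^ 2 := by positivity
  have hFeq : F = fun t => (B W - X * W / (2 * Y * Z)) * t + -(X + Y * Z + Z) / (2 * Y * Z) +
      1 / (2 * Y * Z) * √((X * W * t + (X - Y * Z + Z)) ^ 2 + 4 * Y * Z ^ 2) := by
    funext t
    have harg : X * (t * W) + X - Y * Z + Z = X * W * t + (X - Y * Z + Z) := by ring
    rw [hF, hB (t * W), harg]
    field_simp
    ring
  have hF'' : deriv (deriv F) α = 2 * Z * (X * W) ^ 2 /
      (((α * X * W + X - Y * Z + Z) ^ 2 + 4 * Y * Z ^ 2) ^ ((3 : ℝ) / 2)) := by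
    have hs : Differentiable ℝ fun t => √((X * W * t + (X - Y * Z + Z)) ^ 2 + 4 * Y * Z ^ 2) :=
      fun t => (hasDerivAt_sqrt_sq_add _ _ hd t).differentiableAt
    rw [hFeq, deriv_deriv_affine_add_const_mul hs, deriv_deriv_sqrt_sq_add _ _ hd,
      show α * X * W + X - Y * Z + Z = X * W * α + (X - Y * Z + Z) by ring]
    field_simp
    ring
  exact ⟨hF'', hF'' ▸ by positivity⟩
end
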